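/- Let l > 0 and let V : ℝ/lℤ → ℝ be a continuous potential. Suppose J is a nonnegative integer such that (2π/l)²·J² ≤ V everywhere on the circle, with strict inequality at some point. Then the quadratic form Q(η) = ∫((η')² - V·η²) ds is negative definite on the (2J+1)-dimensional span of {1, cos(2πjs/l), sin(2πjs/l) : 1 ≤ j ≤ J}; consequently the operator -d²/ds² - V has at least 2J+1 negative eigenvalues. -/

import Mathlib

open Real MeasureTheory intervalIntegral

namespace SchrodNeg

variable {l : ℝ}

lemma analyticAt_rcos (x : ℝ) : AnalyticAt ℝ Real.cos x := by
  have h1 : AnalyticAt ℝ (fun t : ℝ => Complex.cos (t : ℂ)) x :=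
    ((Complex.differentiable_cos.analyticAt (x : ℂ)).restrictScalars).comp
      (Complex.ofRealCLM.analyticAt x)
  have h2 : AnalyticAt ℝ (fun t : ℝ => (Complex.cos (t : ℂ)).re) x :=
    (Complex.reCLM.analyticAt _).comp h1
  refine h2.congr ?_
  filter_upwards with t
  simp [← Complex.ofReal_cos]

lemma analyticAt_rsin (x : ℝ) : AnalyticAt ℝ Real.sin x := by
  have h1 : AnalyticAt ℝ (fun t : ℝ => Complex.sin (t : ℂ)) x :=
    ((Complex.differentiable_sin.analyticAt (x : ℂ)).restrictScalars).comp
      (Complex.ofRealCLM.analyticAt x)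
  have h2 : AnalyticAt ℝ (fun t : ℝ => (Complex.sin (t : ℂ)).re) x :=
    (Complex.reCLM.analyticAt _).comp h1
  refine h2.congr ?_
  filter_upwards with t
  simp [← Complex.ofReal_sin]

variable {l : ℝ}

lemma int_cosZ (hl : 0 < l) (m : ℤ) :
    ∫ s in (0:ℝ)..l, Real.cos (2*π*m/l*s) = if m = 0 then l else 0 := by
  rcases eq_or_ne m 0 with h | h
  · simp [h]
  · have hc : (2*π*(m:ℝ)/l) ≠ 0 := by
      have := Real.pi_ne_zero
      have hm : (m:ℝ) ≠ 0 := Int.cast_ne_zero.mpr h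
      positivity
    set c := 2*π*(m:ℝ)/l with hcdef
    have hderiv : ∀ s ∈ Set.uIcc (0:ℝ) l, HasDerivAt (fun x => Real.sin (c*x)/c) (Real.cos (c*s)) s := by
      intro s _
      have h1 : HasDerivAt (fun x : ℝ => c*x) c s := by simpa using (hasDerivAt_id s).const_mul c
      have h2 := (h1.sin).div_const c
      simpa [mul_div_cancel_right₀ _ hc] using h2
    rw [if_neg h, intervalIntegral.integral_eq_sub_of_hasDerivAt hderiv
      ((Real.continuous_cos.comp (continuous_const.mul continuous_id)).intervalIntegrable _ _)]
    have h3 : c * l = ((2*m : ℤ):ℝ) * π := by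
      rw [hcdef]; field_simp; push_cast; ring
    rw [h3, Real.sin_int_mul_pi]
    simp

lemma int_sinZ (hl : 0 < l) (m : ℤ) :
    ∫ s in (0:ℝ)..l, Real.sin (2*π*m/l*s) = 0 := by
  rcases eq_or_ne m 0 with h | h
  · simp [h]
  · have hc : (2*π*(m:ℝ)/l) ≠ 0 := by
      have := Real.pi_ne_zero
      have hm : (m:ℝ) ≠ 0 := Int.cast_ne_zero.mpr h
      positivity
    set c := 2*π*(m:ℝ)/l with hcdef
    have hderiv : ∀ s ∈ Set.uIcc (0:ℝ) l, HasDerivAt (fun x => -(Real.cos (c*x))/c) (Real.sin (c*s)) s := by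
      intro s _
      have h1 : HasDerivAt (fun x : ℝ => c*x) c s := by simpa using (hasDerivAt_id s).const_mul c
      have h2 := ((h1.cos).neg).div_const c
      have h3 : Real.sin (c * s) * c / c = Real.sin (c*s) := mul_div_cancel_right₀ _ hc
      simpa [h3] using h2
    rw [intervalIntegral.integral_eq_sub_of_hasDerivAt hderiv
      ((Real.continuous_sin.comp (continuous_const.mul continuous_id)).intervalIntegrable _ _)]
    have h3 : c * l = (m:ℝ) * (2 * π) := by
      rw [hcdef]; field_simp
    rw [h3]
    have := Real.cos_int_mul_two_pi m
    simp [this]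


lemma contc (a : ℝ) : Continuous (fun s : ℝ => Real.cos (a*s)) :=
  Real.continuous_cos.comp (continuous_const.mul continuous_id)
lemma conts (a : ℝ) : Continuous (fun s : ℝ => Real.sin (a*s)) :=
  Real.continuous_sin.comp (continuous_const.mul continuous_id)

lemma int_cc (hl : 0 < l) (m n : ℤ) :
    ∫ s in (0:ℝ)..l, Real.cos (2*π*m/l*s) * Real.cos (2*π*n/l*s)
      = ((if m = n then l else 0) + (if m = -n then l else 0))/2 := by
  have key : ∀ s : ℝ, Real.cos (2*π*m/l*s) * Real.cos (2*π*n/l*s)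
      = (Real.cos (2*π*((m-n : ℤ):ℝ)/l*s) + Real.cos (2*π*((m+n : ℤ):ℝ)/l*s))/2 := by
    intro s
    have h := Real.two_mul_cos_mul_cos (2*π*m/l*s) (2*π*n/l*s)
    have hx : 2*π*(m:ℝ)/l*s - 2*π*(n:ℝ)/l*s = 2*π*((m-n : ℤ):ℝ)/l*s := by push_cast; ring
    have hy : 2*π*(m:ℝ)/l*s + 2*π*(n:ℝ)/l*s = 2*π*((m+n : ℤ):ℝ)/l*s := by push_cast; ring
    rw [hx, hy] at h
    linarith
  simp_rw [key]
  rw [intervalIntegral.integral_div, intervalIntegral.integral_add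
    ((contc _).intervalIntegrable _ _) ((contc _).intervalIntegrable _ _),
    int_cosZ hl, int_cosZ hl]
  congr 2
  · simp [sub_eq_zero]
  · simp [add_eq_zero_iff_eq_neg]

lemma int_ss (hl : 0 < l) (m n : ℤ) :
    ∫ s in (0:ℝ)..l, Real.sin (2*π*m/l*s) * Real.sin (2*π*n/l*s)
      = ((if m = n then l else 0) - (if m = -n then l else 0))/2 := by
  have key : ∀ s : ℝ, Real.sin (2*π*m/l*s) * Real.sin (2*π*n/l*s)
      = (Real.cos (2*π*((m-n : ℤ):ℝ)/l*s) - Real.cos (2*π*((m+n : ℤ):ℝ)/l*s))/2 := by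
    intro s
    have h := Real.two_mul_sin_mul_sin (2*π*m/l*s) (2*π*n/l*s)
    have hx : 2*π*(m:ℝ)/l*s - 2*π*(n:ℝ)/l*s = 2*π*((m-n : ℤ):ℝ)/l*s := by push_cast; ring
    have hy : 2*π*(m:ℝ)/l*s + 2*π*(n:ℝ)/l*s = 2*π*((m+n : ℤ):ℝ)/l*s := by push_cast; ring
    rw [hx, hy] at h
    linarith
  simp_rw [key]
  rw [intervalIntegral.integral_div, intervalIntegral.integral_sub
    ((contc _).intervalIntegrable _ _) ((contc _).intervalIntegrable _ _),
    int_cosZ hl, int_cosZ hl]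
  congr 2
  · simp [sub_eq_zero]
  · simp [add_eq_zero_iff_eq_neg]

lemma int_sc (hl : 0 < l) (m n : ℤ) :
    ∫ s in (0:ℝ)..l, Real.sin (2*π*m/l*s) * Real.cos (2*π*n/l*s) = 0 := by
  have key : ∀ s : ℝ, Real.sin (2*π*m/l*s) * Real.cos (2*π*n/l*s)
      = (Real.sin (2*π*((m-n : ℤ):ℝ)/l*s) + Real.sin (2*π*((m+n : ℤ):ℝ)/l*s))/2 := by
    intro s
    have h := Real.two_mul_sin_mul_cos (2*π*m/l*s) (2*π*n/l*s)
    have hx : 2*π*(m:ℝ)/l*s - 2*π*(n:ℝ)/l*s = 2*π*((m-n : ℤ):ℝ)/l*s := by push_cast; ring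
    have hy : 2*π*(m:ℝ)/l*s + 2*π*(n:ℝ)/l*s = 2*π*((m+n : ℤ):ℝ)/l*s := by push_cast; ring
    rw [hx, hy] at h
    linarith
  simp_rw [key]
  rw [intervalIntegral.integral_div, intervalIntegral.integral_add
    ((conts _).intervalIntegrable _ _) ((conts _).intervalIntegrable _ _),
    int_sinZ hl, int_sinZ hl]
  simp


abbrev Idx (J : ℕ) := (Fin J ⊕ Fin J) ⊕ Fin 1

noncomputable def w (l : ℝ) {J : ℕ} : Idx J → ℝ → ℝ
  | .inl (.inl k) => fun s => Real.cos (2*π*(((k:ℕ)+1 : ℤ):ℝ)/l*s)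
  | .inl (.inr k) => fun s => Real.sin (2*π*(((k:ℕ)+1 : ℤ):ℝ)/l*s)
  | .inr _ => fun _ => 1

noncomputable def ν (l : ℝ) {J : ℕ} : Idx J → ℝ
  | .inl (.inl k) => 2*π*(((k:ℕ)+1 : ℤ):ℝ)/l
  | .inl (.inr k) => 2*π*(((k:ℕ)+1 : ℤ):ℝ)/l
  | .inr _ => 0

noncomputable def w' (l : ℝ) {J : ℕ} : Idx J → ℝ → ℝ
  | .inl (.inl k) => fun s => -(2*π*(((k:ℕ)+1 : ℤ):ℝ)/l) * Real.sin (2*π*(((k:ℕ)+1 : ℤ):ℝ)/l*s)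
  | .inl (.inr k) => fun s => (2*π*(((k:ℕ)+1 : ℤ):ℝ)/l) * Real.cos (2*π*(((k:ℕ)+1 : ℤ):ℝ)/l*s)
  | .inr _ => fun _ => 0

noncomputable def g (l : ℝ) {J : ℕ} : Idx J → ℝ
  | .inl _ => l/2
  | .inr _ => l

variable {J : ℕ}

lemma contW (i : Idx J) : Continuous (w l i) := by
  rcases i with (k | k) | k <;>
    simp only [w] <;>
    fun_prop

lemma contW' (i : Idx J) : Continuous (w' l i) := by
  rcases i with (k | k) | k <;>
    simp only [w'] <;>
    fun_prop

lemma hasDerivAt_w (i : Idx J) (s : ℝ) : HasDerivAt (w l i) (w' l i s) s := by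
  rcases i with (k | k) | k
  · have h1 : HasDerivAt (fun x : ℝ => (2*π*(((k:ℕ)+1 : ℤ):ℝ)/l)*x) (2*π*(((k:ℕ)+1 : ℤ):ℝ)/l) s := by
      simpa using (hasDerivAt_id s).const_mul (2*π*(((k:ℕ)+1 : ℤ):ℝ)/l)
    have := h1.cos
    simp only [w, w']
    convert this using 1
    ring
  · have h1 : HasDerivAt (fun x : ℝ => (2*π*(((k:ℕ)+1 : ℤ):ℝ)/l)*x) (2*π*(((k:ℕ)+1 : ℤ):ℝ)/l) s := by
      simpa using (hasDerivAt_id s).const_mul (2*π*(((k:ℕ)+1 : ℤ):ℝ)/l)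
    have := h1.sin
    simp only [w, w']
    convert this using 1
    ring
  · simp only [w, w']
    exact hasDerivAt_const s 1 |>.congr_deriv rfl

lemma analyticAt_w (i : Idx J) (x : ℝ) : AnalyticAt ℝ (w l i) x := by
  rcases i with (k | k) | k
  · exact (analyticAt_rcos _).comp
      ((analyticAt_const (v := (2*π*(((k:ℕ)+1 : ℤ):ℝ)/l))).mul analyticAt_id)
  · exact (analyticAt_rsin _).comp
      ((analyticAt_const (v := (2*π*(((k:ℕ)+1 : ℤ):ℝ)/l))).mul analyticAt_id)
  · exact analyticAt_const

lemma int_ww (hl : 0 < l) (i j : Idx J) :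
    ∫ s in (0:ℝ)..l, w l i s * w l j s = if i = j then g l i else 0 := by
  have hπ := Real.pi_pos
  rcases i with (k | k) | k <;> rcases j with (k' | k') | k'
  · simp only [w]
    rw [int_cc hl]
    have h1 : ¬((k:ℕ)+1 : ℤ) = -((k':ℕ)+1 : ℤ) := by omega
    rw [if_neg h1]
    by_cases h : k = k'
    · subst h
      rw [if_pos rfl, if_pos rfl]
      norm_num [g]
    · have h2 : ¬((k:ℕ)+1 : ℤ) = ((k':ℕ)+1 : ℤ) := by
        simp only [ne_eq, add_left_inj, Int.natCast_inj]
        exact fun hh => h (Fin.ext hh)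
      rw [if_neg h2, if_neg (by simp [h])]
      norm_num
  · simp only [w]
    have key : ∀ s : ℝ, Real.cos (2*π*(((k:ℕ)+1 : ℤ):ℝ)/l*s) * Real.sin (2*π*(((k':ℕ)+1 : ℤ):ℝ)/l*s)
        = Real.sin (2*π*(((k':ℕ)+1 : ℤ):ℝ)/l*s) * Real.cos (2*π*(((k:ℕ)+1 : ℤ):ℝ)/l*s) :=
      fun s => mul_comm _ _
    simp_rw [key, int_sc hl]
    simp
  · simp only [w]
    simp_rw [mul_one]
    rw [int_cosZ hl, if_neg (by omega), if_neg (by simp)]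
  · simp only [w]
    rw [int_sc hl]
    simp
  · simp only [w]
    rw [int_ss hl]
    have h1 : ¬((k:ℕ)+1 : ℤ) = -((k':ℕ)+1 : ℤ) := by omega
    rw [if_neg h1]
    by_cases h : k = k'
    · subst h
      rw [if_pos rfl, if_pos rfl]
      norm_num [g]
    · have h2 : ¬((k:ℕ)+1 : ℤ) = ((k':ℕ)+1 : ℤ) := by
        simp only [ne_eq, add_left_inj, Int.natCast_inj]
        exact fun hh => h (Fin.ext hh)
      rw [if_neg h2, if_neg (by simp [h])]
      norm_num
  · simp only [w]
    simp_rw [mul_one, int_sinZ hl]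
    simp
  · simp only [w]
    simp_rw [one_mul]
    rw [int_cosZ hl, if_neg (by omega), if_neg (by simp)]
  · simp only [w]
    simp_rw [one_mul, int_sinZ hl]
    simp
  · simp only [w]
    simp_rw [mul_one]
    rw [intervalIntegral.integral_const]
    have : k = k' := Subsingleton.elim _ _
    subst this
    simp [g]

lemma int_w'w' (hl : 0 < l) (i j : Idx J) :
    ∫ s in (0:ℝ)..l, w' l i s * w' l j s = if i = j then (ν l i)^2 * (l/2) else 0 := by
  rcases i with (k | k) | k <;> rcases j with (k' | k') | k'
  · simp only [w']
    set a := 2*π*(((k:ℕ)+1 : ℤ):ℝ)/l with ha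
    set b := 2*π*(((k':ℕ)+1 : ℤ):ℝ)/l with hb
    have key : ∀ s : ℝ, (-a * Real.sin (a*s)) * (-b * Real.sin (b*s))
        = (a*b) * (Real.sin (a*s) * Real.sin (b*s)) := fun s => by ring
    simp_rw [key]
    rw [intervalIntegral.integral_const_mul, ha, hb, int_ss hl]
    have h1 : ¬((k:ℕ)+1 : ℤ) = -((k':ℕ)+1 : ℤ) := by omega
    rw [if_neg h1]
    by_cases h : k = k'
    · subst h
      rw [if_pos rfl, if_pos rfl]
      simp only [ν]
      ring
    · have h2 : ¬((k:ℕ)+1 : ℤ) = ((k':ℕ)+1 : ℤ) := by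
        simp only [ne_eq, add_left_inj, Int.natCast_inj]
        exact fun hh => h (Fin.ext hh)
      rw [if_neg h2, if_neg (by simp [h])]
      simp
  · simp only [w']
    set a := 2*π*(((k:ℕ)+1 : ℤ):ℝ)/l with ha
    set b := 2*π*(((k':ℕ)+1 : ℤ):ℝ)/l with hb
    have key : ∀ s : ℝ, (-a * Real.sin (a*s)) * (b * Real.cos (b*s))
        = (-(a*b)) * (Real.sin (a*s) * Real.cos (b*s)) := fun s => by ring
    simp_rw [key]
    rw [intervalIntegral.integral_const_mul, ha, hb, int_sc hl]
    simp
  · simp only [w']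
    simp
  · simp only [w']
    set a := 2*π*(((k:ℕ)+1 : ℤ):ℝ)/l with ha
    set b := 2*π*(((k':ℕ)+1 : ℤ):ℝ)/l with hb
    have key : ∀ s : ℝ, (a * Real.cos (a*s)) * (-b * Real.sin (b*s))
        = (-(a*b)) * (Real.sin (b*s) * Real.cos (a*s)) := fun s => by ring
    simp_rw [key]
    rw [intervalIntegral.integral_const_mul, ha, hb, int_sc hl]
    simp
  · simp only [w']
    set a := 2*π*(((k:ℕ)+1 : ℤ):ℝ)/l with ha
    set b := 2*π*(((k':ℕ)+1 : ℤ):ℝ)/l with hb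
    have key : ∀ s : ℝ, (a * Real.cos (a*s)) * (b * Real.cos (b*s))
        = (a*b) * (Real.cos (a*s) * Real.cos (b*s)) := fun s => by ring
    simp_rw [key]
    rw [intervalIntegral.integral_const_mul, ha, hb, int_cc hl]
    have h1 : ¬((k:ℕ)+1 : ℤ) = -((k':ℕ)+1 : ℤ) := by omega
    rw [if_neg h1]
    by_cases h : k = k'
    · subst h
      rw [if_pos rfl, if_pos rfl]
      simp only [ν]
      ring
    · have h2 : ¬((k:ℕ)+1 : ℤ) = ((k':ℕ)+1 : ℤ) := by
        simp only [ne_eq, add_left_inj, Int.natCast_inj]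
        exact fun hh => h (Fin.ext hh)
      rw [if_neg h2, if_neg (by simp [h])]
      simp
  · simp only [w']
    simp
  · simp only [w']
    simp
  · simp only [w']
    simp
  · simp only [w']
    have : k = k' := Subsingleton.elim _ _
    subst this
    simp [ν]

lemma int_sum_sq (hl : 0 < l) {ι : Type*} [Fintype ι] [DecidableEq ι] (f : ι → ℝ → ℝ)
    (hf : ∀ i, Continuous (f i)) (G : ι → ℝ)
    (horth : ∀ i j, ∫ s in (0:ℝ)..l, f i s * f j s = if i = j then G i else 0)
    (c : ι → ℝ) :
    ∫ s in (0:ℝ)..l, (∑ i, c i * f i s)^2 = ∑ i, (c i)^2 * G i := by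
  classical
  have expand : ∀ s : ℝ, (∑ i, c i * f i s)^2
      = ∑ i, ∑ j, (c i * c j) * (f i s * f j s) := by
    intro s
    rw [sq, Finset.sum_mul_sum]
    refine Finset.sum_congr rfl fun i _ => Finset.sum_congr rfl fun j _ => by ring
  simp_rw [expand]
  rw [intervalIntegral.integral_finset_sum]
  swap
  · intro i _
    exact (continuous_finset_sum _ fun j _ =>
      (continuous_const.mul ((hf i).mul (hf j)))).intervalIntegrable _ _
  have inner : ∀ i : ι, (∫ s in (0:ℝ)..l, ∑ j, (c i * c j) * (f i s * f j s))
      = (c i)^2 * G i := by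
    intro i
    rw [intervalIntegral.integral_finset_sum]
    swap
    · intro j _
      exact (continuous_const.mul ((hf i).mul (hf j))).intervalIntegrable _ _
    have : ∀ j : ι, (∫ s in (0:ℝ)..l, (c i * c j) * (f i s * f j s))
        = (c i * c j) * (if i = j then G i else 0) := by
      intro j
      rw [intervalIntegral.integral_const_mul, horth]
    simp_rw [this]
    rw [Finset.sum_eq_single i]
    · simp [sq]
    · intro j _ hj
      simp [Ne.symm hj]
    · intro h
      exact absurd (Finset.mem_univ i) h
  simp_rw [inner]


/-- The trig-polynomial associated to a coefficient vector. -/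
noncomputable def σf (l : ℝ) {J : ℕ} (c : Idx J → ℝ) : ℝ → ℝ := fun s => ∑ i, c i * w l i s

lemma cont_σf (c : Idx J → ℝ) : Continuous (σf l c) :=
  continuous_finset_sum _ fun i _ => continuous_const.mul (contW i)

lemma deriv_σf (c : Idx J → ℝ) (s : ℝ) : deriv (σf l c) s = ∑ i, c i * w' l i s :=
  (HasDerivAt.fun_sum fun i _ => (hasDerivAt_w i s).const_mul (c i)).deriv

lemma cont_deriv_σf (c : Idx J → ℝ) : Continuous (deriv (σf l c)) := by
  have : deriv (σf l c) = fun s => ∑ i, c i * w' l i s := funext (deriv_σf c)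
  rw [this]
  exact continuous_finset_sum _ fun i _ => continuous_const.mul (contW' i)

lemma analytic_σf (c : Idx J → ℝ) : AnalyticOnNhd ℝ (σf l c) Set.univ := fun x _ =>
  Finset.analyticAt_fun_sum _ fun i _ => (analyticAt_const (v := c i)).mul (analyticAt_w i x)

lemma parseval_σf (hl : 0 < l) (c : Idx J → ℝ) :
    ∫ s in (0:ℝ)..l, (σf l c s)^2 = ∑ i, (c i)^2 * g l i :=
  int_sum_sq hl (w l) contW (g l) (int_ww hl) c

lemma energy_σf (hl : 0 < l) (c : Idx J → ℝ) :
    ∫ s in (0:ℝ)..l, (deriv (σf l c) s)^2 = ∑ i, (c i)^2 * ((ν l i)^2 * (l/2)) := by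
  rw [← int_sum_sq hl (w' l) contW' (fun i => (ν l i)^2 * (l/2)) (int_w'w' hl) c]
  apply intervalIntegral.integral_congr
  intro s _
  simp only [deriv_σf c s]

lemma freq_le (hl : 0 < l) (i : Idx J) : (ν l i)^2 ≤ (2*π/l)^2 * (J:ℝ)^2 := by
  have hπ := Real.pi_pos
  rcases i with (k | k) | k
  · have hk : ((k:ℕ):ℝ) + 1 ≤ (J:ℝ) := by exact_mod_cast k.isLt
    have h0 : (0:ℝ) ≤ ((k:ℕ):ℝ) + 1 := by positivity
    have h1 : (2*π*(((k:ℕ)+1 : ℤ):ℝ)/l) = (2*π/l) * (((k:ℕ):ℝ)+1) := by push_cast; ring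
    simp only [ν]
    rw [h1, mul_pow]
    have := pow_le_pow_left₀ h0 hk 2
    gcongr
  · have hk : ((k:ℕ):ℝ) + 1 ≤ (J:ℝ) := by exact_mod_cast k.isLt
    have h0 : (0:ℝ) ≤ ((k:ℕ):ℝ) + 1 := by positivity
    have h1 : (2*π*(((k:ℕ)+1 : ℤ):ℝ)/l) = (2*π/l) * (((k:ℕ):ℝ)+1) := by push_cast; ring
    simp only [ν]
    rw [h1, mul_pow]
    have := pow_le_pow_left₀ h0 hk 2
    gcongr
  · simp only [ν]
    rw [zero_pow two_ne_zero]
    positivity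

/-- Positivity of `∫ (V - B) η²` for nonzero analytic η. -/
lemma pos_part (hl : 0 < l) {V : ℝ → ℝ} (hVc : Continuous V) (hVper : Function.Periodic V l)
    {B : ℝ} (hB : ∀ s, B ≤ V s) (hBs : ∃ s₀, B < V s₀)
    {η : ℝ → ℝ} (hηc : Continuous η) (hηa : AnalyticOnNhd ℝ η Set.univ) (hη : η ≠ 0) :
    0 < ∫ s in (0:ℝ)..l, (V s - B) * (η s)^2 := by
  obtain ⟨s₀, hs₀⟩ := hBs
  obtain ⟨s₀', hmem, heq⟩ := hVper.exists_mem_Ico₀ hl s₀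
  rw [heq] at hs₀
  -- find an interior point t ∈ Ioo 0 l with B < V t
  have hopen : IsOpen {s : ℝ | B < V s} := isOpen_lt continuous_const hVc
  obtain ⟨ε, hε, hball⟩ := Metric.isOpen_iff.1 hopen s₀' hs₀
  set t := s₀' + min ε (l - s₀') / 2 with ht
  have hminpos : 0 < min ε (l - s₀') := lt_min hε (by linarith [hmem.2])
  have htmem : t ∈ Set.Ioo (0:ℝ) l := by
    constructor
    · have := hmem.1; simp only [ht]; linarith
    · have h1 : min ε (l - s₀') ≤ l - s₀' := min_le_right _ _
      simp only [ht]; linarith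
  have htV : B < V t := by
    apply hball
    simp only [Metric.mem_ball, Real.dist_eq, ht]
    rw [add_sub_cancel_left, abs_of_pos (by linarith)]
    have : min ε (l - s₀') ≤ ε := min_le_left _ _
    linarith
  -- the open set where things are positive
  have hO : IsOpen ({s : ℝ | B < V s} ∩ Set.Ioo 0 l) := hopen.inter isOpen_Ioo
  -- find s₁ in it where η ≠ 0
  have hex : ∃ s₁ ∈ {s : ℝ | B < V s} ∩ Set.Ioo 0 l, η s₁ ≠ 0 := by
    by_contra hcon
    push_neg at hcon
    have hev : η =ᶠ[nhds t] 0 := by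
      filter_upwards [hO.mem_nhds ⟨htV, htmem⟩] with x hx
      exact hcon x hx
    have := hηa.eqOn_zero_of_preconnected_of_eventuallyEq_zero isPreconnected_univ
      (Set.mem_univ t) hev
    exact hη (funext fun s => this (Set.mem_univ s))
  obtain ⟨s₁, ⟨hs₁V, hs₁mem⟩, hs₁η⟩ := hex
  set f : ℝ → ℝ := fun s => (V s - B) * (η s)^2 with hf
  have hfc : Continuous f := (hVc.sub continuous_const).mul (hηc.pow 2)
  have hfnn : ∀ s, 0 ≤ f s := fun s => mul_nonneg (by linarith [hB s]) (sq_nonneg _)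
  have hfs₁ : 0 < f s₁ :=
    mul_pos (sub_pos.2 (by exact hs₁V)) ((sq_nonneg _).lt_of_ne (Ne.symm (pow_ne_zero 2 hs₁η)))
  -- neighborhood where f > 0
  have hfopen : IsOpen {s : ℝ | 0 < f s} := isOpen_lt continuous_const hfc
  obtain ⟨ε₁, hε₁, hball₁⟩ := Metric.isOpen_iff.1 hfopen s₁ hfs₁
  set δ := min ε₁ (min s₁ (l - s₁)) / 2 with hδ
  have hm1 := min_le_left ε₁ (min s₁ (l - s₁))
  have hm2 := (min_le_right ε₁ (min s₁ (l - s₁))).trans (min_le_left s₁ (l - s₁))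
  have hm3 := (min_le_right ε₁ (min s₁ (l - s₁))).trans (min_le_right s₁ (l - s₁))
  have hδpos : 0 < δ := by
    have h1 := hs₁mem.1; have h2 := hs₁mem.2
    exact div_pos (lt_min hε₁ (lt_min (by linarith) (by linarith))) two_pos
  have hc0 : 0 ≤ s₁ - δ := by
    have := hs₁mem.1
    simp only [hδ]; linarith
  have hcd : s₁ - δ < s₁ + δ := by linarith
  have hdl : s₁ + δ ≤ l := by
    have := hs₁mem.2
    simp only [hδ]; linarith
  have hpos_on : ∀ x ∈ Set.Ioo (s₁ - δ) (s₁ + δ), 0 < f x := by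
    intro x hx
    apply hball₁
    simp only [Metric.mem_ball, Real.dist_eq]
    rw [abs_sub_lt_iff]
    constructor <;> [skip; skip] <;>
      · have h1 := hx.1; have h2 := hx.2
        simp only [hδ] at h1 h2 ⊢
        linarith
  have hint : ∀ a b : ℝ, IntervalIntegrable f volume a b := fun a b =>
    hfc.intervalIntegrable a b
  have e2 : (∫ s in (s₁ - δ)..(s₁ + δ), f s) + ∫ s in (s₁ + δ)..l, f s
      = ∫ s in (s₁ - δ)..l, f s := integral_add_adjacent_intervals (hint _ _) (hint _ _)
  have e1 : (∫ s in (0:ℝ)..(s₁ - δ), f s) + ∫ s in (s₁ - δ)..l, f s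
      = ∫ s in (0:ℝ)..l, f s := integral_add_adjacent_intervals (hint _ _) (hint _ _)
  have p1 : 0 ≤ ∫ s in (0:ℝ)..(s₁ - δ), f s :=
    intervalIntegral.integral_nonneg hc0 fun u _ => hfnn u
  have p2 : 0 < ∫ s in (s₁ - δ)..(s₁ + δ), f s :=
    intervalIntegral_pos_of_pos_on (hint _ _) hpos_on hcd
  have p3 : 0 ≤ ∫ s in (s₁ + δ)..l, f s :=
    intervalIntegral.integral_nonneg hdl fun u _ => hfnn u
  have : 0 < ∫ s in (0:ℝ)..l, f s := by linarith
  exact this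


lemma key_neg (hl : 0 < l) {V : ℝ → ℝ} (hVc : Continuous V) (hVper : Function.Periodic V l)
    (hJ : ∀ s : ℝ, (2*π/l)^2 * (J:ℝ)^2 ≤ V s)
    (hJs : ∃ s₀ : ℝ, (2*π/l)^2 * (J:ℝ)^2 < V s₀)
    (c : Idx J → ℝ) (hne : σf l c ≠ 0) :
    (∫ s in (0:ℝ)..l, ((deriv (σf l c) s)^2 - V s * (σf l c s)^2)) < 0 := by
  have hπ := Real.pi_pos
  set B := (2*π/l)^2*(J:ℝ)^2 with hBdef
  have hB0 : 0 ≤ B := by positivity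
  have h2 := parseval_σf hl c
  have h1 := energy_σf hl c
  have h3 : ∑ i, (c i)^2 * ((ν l i)^2*(l/2)) ≤ B * ∑ i, (c i)^2 * g l i := by
    rw [Finset.mul_sum]
    apply Finset.sum_le_sum
    intro i _
    have hfl := freq_le (J := J) hl i
    have hg2 : (ν l i)^2 * (l/2) ≤ B * g l i := by
      rcases i with (k | k) | k
      · simp only [g]
        nlinarith [freq_le (J := J) hl (Sum.inl (Sum.inl k) : Idx J)]
      · simp only [g]
        nlinarith [freq_le (J := J) hl (Sum.inl (Sum.inr k) : Idx J)]
      · simp only [g, ν]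
        nlinarith
    calc (c i)^2 * ((ν l i)^2*(l/2)) ≤ (c i)^2 * (B * g l i) :=
          mul_le_mul_of_nonneg_left hg2 (sq_nonneg _)
      _ = B * ((c i)^2 * g l i) := by ring
  have h4 : 0 < ∫ s in (0:ℝ)..l, (V s - B)*(σf l c s)^2 :=
    pos_part hl hVc hVper hJ hJs (cont_σf c) (analytic_σf c) hne
  have hηc := cont_σf (l := l) c
  have hdc := cont_deriv_σf (l := l) c
  have i1 : IntervalIntegrable (fun s => (deriv (σf l c) s)^2) volume 0 l :=
    (hdc.pow 2).intervalIntegrable _ _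
  have i2 : IntervalIntegrable (fun s => V s * (σf l c s)^2) volume 0 l :=
    (hVc.mul (hηc.pow 2)).intervalIntegrable _ _
  have i3 : IntervalIntegrable (fun s => B * (σf l c s)^2) volume 0 l :=
    (continuous_const.mul (hηc.pow 2)).intervalIntegrable _ _
  have i4 : IntervalIntegrable (fun s => (V s - B) * (σf l c s)^2) volume 0 l :=
    ((hVc.sub continuous_const).mul (hηc.pow 2)).intervalIntegrable _ _
  have hsplitV : ∫ s in (0:ℝ)..l, V s * (σf l c s)^2
      = B * (∫ s in (0:ℝ)..l, (σf l c s)^2) + ∫ s in (0:ℝ)..l, (V s - B)*(σf l c s)^2 := by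
    rw [← intervalIntegral.integral_const_mul, ← intervalIntegral.integral_add i3 i4]
    apply intervalIntegral.integral_congr
    intro s _
    ring
  rw [intervalIntegral.integral_sub i1 i2, hsplitV, h1, h2]
  linarith [h3, h4]

lemma smoothW (i : Idx J) : ContDiff ℝ (⊤ : ℕ∞) (w l i) := by
  rcases i with (k | k) | k
  · exact Real.contDiff_cos.comp (contDiff_const.mul contDiff_id)
  · exact Real.contDiff_sin.comp (contDiff_const.mul contDiff_id)
  · exact contDiff_const

lemma perW (hl : 0 < l) (i : Idx J) : Function.Periodic (w l i) l := by
  rcases i with (k | k) | k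
  · intro s
    simp only [w]
    have harg : 2*π*(((k:ℕ)+1 : ℤ):ℝ)/l*(s+l) = 2*π*(((k:ℕ)+1 : ℤ):ℝ)/l*s
        + (((k:ℕ)+1 : ℤ):ℝ)*(2*π) := by
      field_simp
    rw [harg]
    exact_mod_cast Real.cos_add_int_mul_two_pi _ ((k:ℕ)+1 : ℤ)
  · intro s
    simp only [w]
    have harg : 2*π*(((k:ℕ)+1 : ℤ):ℝ)/l*(s+l) = 2*π*(((k:ℕ)+1 : ℤ):ℝ)/l*s
        + (((k:ℕ)+1 : ℤ):ℝ)*(2*π) := by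
      field_simp
    rw [harg]
    exact_mod_cast Real.sin_add_int_mul_two_pi _ ((k:ℕ)+1 : ℤ)
  · intro s
    rfl


/-- Any nonzero element of the span of the trig family has negative quadratic form. -/
lemma neg_on_span (hl : 0 < l) {V : ℝ → ℝ} (hVc : Continuous V)
    (hVper : Function.Periodic V l)
    (hJ : ∀ s : ℝ, (2*π/l)^2 * (J:ℝ)^2 ≤ V s)
    (hJs : ∃ s₀ : ℝ, (2*π/l)^2 * (J:ℝ)^2 < V s₀) :
    ∀ η ∈ Submodule.span ℝ (Set.range (w l (J := J))), η ≠ 0 →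
      (∫ s in (0:ℝ)..l, ((deriv η s)^2 - V s * (η s)^2)) < 0 := by
  intro η hη hηne
  obtain ⟨c, hc⟩ := (Submodule.mem_span_range_iff_exists_fun ℝ).1 hη
  have hfun : σf l c = η := by
    funext s
    rw [← hc]
    simp [σf, Finset.sum_apply]
  subst hfun
  exact key_neg hl hVc hVper hJ hJs c hηne

lemma range_w (hl : 0 < l) :
    Set.range (w l (J := J)) = (({fun _ : ℝ => (1:ℝ)} : Set (ℝ → ℝ)) ∪
      {f | ∃ j : ℕ, 1 ≤ j ∧ j ≤ J ∧
        ((f = fun s => Real.cos (2*π*j*s/l)) ∨ (f = fun s => Real.sin (2*π*j*s/l)))}) := by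
  have hl' : l ≠ 0 := ne_of_gt hl
  ext f
  constructor
  · rintro ⟨i, rfl⟩
    rcases i with (k | k) | k
    · right
      refine ⟨(k:ℕ)+1, Nat.succ_le_succ (Nat.zero_le _), k.isLt, Or.inl ?_⟩
      funext s
      show Real.cos (2*π*(((k:ℕ)+1 : ℤ):ℝ)/l*s) = Real.cos (2*π*(((k:ℕ)+1 : ℕ):ℝ)*s/l)
      congr 1
      push_cast
      ring
    · right
      refine ⟨(k:ℕ)+1, Nat.succ_le_succ (Nat.zero_le _), k.isLt, Or.inr ?_⟩
      funext s
      show Real.sin (2*π*(((k:ℕ)+1 : ℤ):ℝ)/l*s) = Real.sin (2*π*(((k:ℕ)+1 : ℕ):ℝ)*s/l)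
      congr 1
      push_cast
      ring
    · left
      rfl
  · rintro (hf | ⟨j, hj1, hjJ, (rfl | rfl)⟩)
    · simp only [Set.mem_singleton_iff] at hf
      exact ⟨Sum.inr 0, hf.symm⟩
    · refine ⟨Sum.inl (Sum.inl ⟨j-1, by omega⟩), ?_⟩
      funext s
      show Real.cos (2*π*(((j-1 : ℕ)+1 : ℤ):ℝ)/l*s) = Real.cos (2*π*(j:ℝ)*s/l)
      have h1 : (((j-1 : ℕ) : ℤ) + 1) = (j : ℤ) := by omega
      rw [h1]
      congr 1
      push_cast
      ring
    · refine ⟨Sum.inl (Sum.inr ⟨j-1, by omega⟩), ?_⟩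
      funext s
      show Real.sin (2*π*(((j-1 : ℕ)+1 : ℤ):ℝ)/l*s) = Real.sin (2*π*(j:ℝ)*s/l)
      have h1 : (((j-1 : ℕ) : ℤ) + 1) = (j : ℤ) := by omega
      rw [h1]
      congr 1
      push_cast
      ring


end SchrodNeg

open SchrodNeg in
/-- Lower bound on the number of negative eigenvalues of -d²/ds² - V on the circle:
if (2π/l)²·J² ≤ V everywhere with strict inequality somewhere, then the form
Q(η) = ∫((η')² - Vη²) is negative definite on the (2J+1)-dimensional span of
{1, cos(2πjs/l), sin(2πjs/l) : 1 ≤ j ≤ J}, so the operator has at least 2J+1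
negative eigenvalues. -/
theorem schrodinger_at_least_negative (l : ℝ) (hl : 0 < l) (V : ℝ → ℝ)
    (hVc : Continuous V) (hVper : Function.Periodic V l) (J : ℕ)
    (hJ : ∀ s : ℝ, (2*π/l)^2 * (J:ℝ)^2 ≤ V s)
    (hJs : ∃ s₀ : ℝ, (2*π/l)^2 * (J:ℝ)^2 < V s₀) :
    (∀ η ∈ Submodule.span ℝ
        (({fun _ : ℝ => (1:ℝ)} : Set (ℝ → ℝ)) ∪
          {f | ∃ j : ℕ, 1 ≤ j ∧ j ≤ J ∧
            ((f = fun s => Real.cos (2*π*j*s/l)) ∨ (f = fun s => Real.sin (2*π*j*s/l)))}),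
      η ≠ 0 → (∫ s in (0:ℝ)..l, ((deriv η s)^2 - V s * (η s)^2)) < 0) ∧
    (∃ v : Fin (2*J+1) → ℝ → ℝ,
      (∀ i, ContDiff ℝ (⊤ : ℕ∞) (v i) ∧ Function.Periodic (v i) l) ∧
      LinearIndependent ℝ v ∧
      ∀ η ∈ Submodule.span ℝ (Set.range v), η ≠ 0 →
        (∫ s in (0:ℝ)..l, ((deriv η s)^2 - V s * (η s)^2)) < 0) := by
  constructor
  · intro η hη hηne
    rw [← range_w hl] at hη
    exact neg_on_span hl hVc hVper hJ hJs η hη hηne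
  · -- the equivalence of index types
    let e : Fin (2*J+1) ≃ Idx J :=
      (finCongr (by omega : 2*J+1 = J+J+1)).trans
        (finSumFinEquiv.symm.trans
          (Equiv.sumCongr finSumFinEquiv.symm (Equiv.refl (Fin 1))))
    refine ⟨w l ∘ e, fun i => ⟨smoothW (e i), perW hl (e i)⟩, ?_, ?_⟩
    · rw [Fintype.linearIndependent_iff]
      intro c hsum i
      set c' : Idx J → ℝ := c ∘ e.symm with hc'
      have hsum' : ∑ i' : Idx J, c' i' • w l i' = 0 := by
        rw [← Equiv.sum_comp e (fun i' => c' i' • w l i')]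
        simpa [hc', Function.comp] using hsum
      have hσ : σf l c' = 0 := by
        funext s
        have := congrFun hsum' s
        simpa [σf, Finset.sum_apply] using this
      have hzero : ∑ i' : Idx J, (c' i')^2 * g l i' = 0 := by
        rw [← parseval_σf hl c', hσ]
        simp
      have hterm : ∀ i' : Idx J, (c' i')^2 * g l i' = 0 := by
        have hnn : ∀ i' ∈ Finset.univ, (0:ℝ) ≤ (c' i')^2 * g l i' := by
          intro i' _
          apply mul_nonneg (sq_nonneg _)
          rcases i' with (k | k) | k <;> simp [g] <;> linarith
        intro i'
        exact (Finset.sum_eq_zero_iff_of_nonneg hnn).1 hzero i' (Finset.mem_univ _)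
      have := hterm (e i)
      have hgpos : 0 < g l (e i) := by
        rcases e i with (k | k) | k <;> simp [g] <;> linarith
      have hc2 : (c' (e i))^2 = 0 := by
        rcases mul_eq_zero.1 this with h | h
        · exact h
        · exact absurd h (ne_of_gt hgpos)
      have : c' (e i) = 0 := pow_eq_zero_iff two_ne_zero |>.1 hc2
      simpa [hc'] using this
    · intro η hη hηne
      rw [Set.range_comp, Equiv.range_eq_univ, Set.image_univ] at hη
      exact neg_on_span hl hVc hVper hJ hJs η hη hηne
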